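/- arXiv:2405.16019 — 2 statements merged into one kernel-verified Lean document; each statement's English description precedes it below -/
import Mathlib

section
/- For each n ≥ 2, let X_1, ..., X_n be independent random variables, each exponentially distributed with rate 1/log n, and let X_{(n)} := max(X_1, ..., X_n). Then, as n → ∞: E(X_{(n)}) ~ (log n)^2, Var(X_{(n)}) ~ (π^2/6)·(log n)^2, and consequently Var(X_{(n)})/E(X_{(n)}) → π^2/6. In particular Var(X_{(n)}) ~ (π^2/6)·E(X_{(n)}), i.e., the maximal order statistic obeys Taylor's law with coefficient π^2/6 and exponent 1. -/
open MeasureTheory ProbabilityTheory Filter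


open MeasureTheory Filter Set Real

lemma expInt {b : ℝ} (hb : 0 < b) :
    IntegrableOn (fun t : ℝ => Real.exp (-(b * t))) (Ioi 0) := by
  simpa using exp_neg_integrableOn_Ioi 0 hb

lemma expIntVal {b : ℝ} (hb : 0 < b) :
    ∫ t in Ioi (0:ℝ), Real.exp (-(b * t)) = 1 / b := by
  have h : ∀ x ∈ Ici (0:ℝ), HasDerivAt (fun t => -Real.exp (-(b * t)) / b)
      (Real.exp (-(b * x))) x := by
    intro x _
    have : HasDerivAt (fun t => -(b * t)) (-b) x := by
      exact ((hasDerivAt_id' x).const_mul b).neg.congr_deriv (by ring)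
    have := (this.exp).neg.div_const b
    refine this.congr_deriv ?_
    field_simp
  have htend : Tendsto (fun t => -Real.exp (-(b * t)) / b) atTop (nhds 0) := by
    have : Tendsto (fun t : ℝ => b * t) atTop atTop :=
      tendsto_id.const_mul_atTop hb
    have := (Real.tendsto_exp_neg_atTop_nhds_zero.comp this).neg.div_const b
    simpa using this
  have := integral_Ioi_of_hasDerivAt_of_tendsto
    ((h 0 (Set.self_mem_Ici)).continuousAt.continuousWithinAt)
    (fun x hx => h x (Set.mem_Ici.mpr (le_of_lt hx))) (expInt hb) htend
  rw [this]
  field_simp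
  simp

lemma texpInt {b : ℝ} (hb : 0 < b) :
    IntegrableOn (fun t : ℝ => t * Real.exp (-(b * t))) (Ioi 0) := by
  apply integrable_of_isBigO_exp_neg (half_pos hb)
  · exact (continuous_id.mul (by continuity)).continuousOn
  · have : Tendsto (fun t : ℝ => t * Real.exp (-(b * t)) / Real.exp (-(b/2 * t)))
        atTop (nhds 0) := by
      have h1 : ∀ᶠ t in atTop, t * Real.exp (-(b * t)) / Real.exp (-(b/2 * t))
          = t * Real.exp (-(b/2 * t)) := by
        filter_upwards with t
        rw [mul_div_assoc, ← Real.exp_sub]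
        ring_nf
      rw [tendsto_congr' h1]
      have h2 : Tendsto (fun t : ℝ => b/2 * t) atTop atTop :=
        tendsto_id.const_mul_atTop (half_pos hb)
      have := (Real.tendsto_pow_mul_exp_neg_atTop_nhds_zero 1).comp h2
      have h3 := this.const_mul (2 / b)
      simp only [Function.comp, pow_one, mul_zero] at h3
      apply h3.congr'
      filter_upwards with t
      field_simp
    have := (Asymptotics.isLittleO_of_tendsto
      (fun x hx => absurd hx (Real.exp_ne_zero _)) this).isBigO
    simpa [neg_mul, mul_comm, mul_assoc, mul_div_assoc] using this

lemma texpIntVal {b : ℝ} (hb : 0 < b) :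
    ∫ t in Ioi (0:ℝ), t * Real.exp (-(b * t)) = 1 / b ^ 2 := by
  have h : ∀ x ∈ Ici (0:ℝ), HasDerivAt (fun t => -((t / b + 1 / b ^ 2) * Real.exp (-(b * t))))
      (x * Real.exp (-(b * x))) x := by
    intro x _
    have hexp : HasDerivAt (fun t => Real.exp (-(b * t))) (-b * Real.exp (-(b * x))) x := by
      have : HasDerivAt (fun t => -(b * t)) (-b) x := by
        exact ((hasDerivAt_id' x).const_mul b).neg.congr_deriv (by ring)
      simpa [mul_comm] using this.exp
    have hlin : HasDerivAt (fun t : ℝ => t / b + 1 / b ^ 2) (1 / b) x := by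
      have := ((hasDerivAt_id x).div_const b).add_const (1 / b ^ 2)
      simpa using this
    have := (hlin.mul hexp).neg
    refine this.congr_deriv ?_
    field_simp
    ring
  have htend : Tendsto (fun t => -((t / b + 1 / b ^ 2) * Real.exp (-(b * t)))) atTop (nhds 0) := by
    have h2 : Tendsto (fun t : ℝ => b * t) atTop atTop :=
      tendsto_id.const_mul_atTop hb
    have h1 := (Real.tendsto_pow_mul_exp_neg_atTop_nhds_zero 1).comp h2
    have h0 := Real.tendsto_exp_neg_atTop_nhds_zero.comp h2
    have := ((h1.const_mul (1 / b ^ 2)).add (h0.const_mul (1 / b ^ 2))).neg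
    simp only [Function.comp, pow_one, mul_zero, add_zero, neg_zero] at this
    apply this.congr'
    filter_upwards with t
    field_simp
  have := integral_Ioi_of_hasDerivAt_of_tendsto
    ((h 0 (Set.self_mem_Ici)).continuousAt.continuousWithinAt)
    (fun x hx => h x (Set.mem_Ici.mpr (le_of_lt hx))) (texpInt hb) htend
  rw [this]
  field_simp
  simp

noncomputable def Hr (n : ℕ) : ℝ := ∑ i ∈ Finset.range n, 1 / ((i : ℝ) + 1)
noncomputable def H2r (n : ℕ) : ℝ := ∑ i ∈ Finset.range n, 1 / ((i : ℝ) + 1) ^ 2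

lemma Hr_succ (n : ℕ) : Hr (n + 1) = Hr n + 1 / ((n : ℝ) + 1) := by
  simp [Hr, Finset.sum_range_succ]

lemma expansion (n : ℕ) (y : ℝ) :
    1 - (1 - y) ^ n = ∑ j ∈ Finset.range n, (-1 : ℝ) ^ j * (n.choose (j + 1)) * y ^ (j + 1) := by
  have h := add_pow (-y) 1 n
  simp only [one_pow, mul_one] at h
  have h1 : (1 - y) ^ n = ∑ k ∈ Finset.range (n + 1), (-y) ^ k * (n.choose k) := by
    rw [← h]; ring_nf
  rw [h1, Finset.sum_range_succ']
  simp only [pow_zero, Nat.choose_zero_right, Nat.cast_one, one_mul]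
  have h2 : ∀ j, (-y) ^ (j + 1) * ((n.choose (j+1) : ℝ)) =
      -((-1:ℝ)^j * (n.choose (j+1)) * y^(j+1)) := by
    intro j
    rw [neg_pow]
    ring_nf
  rw [Finset.sum_congr rfl (fun j _ => h2 j), Finset.sum_neg_distrib]
  ring

lemma keysum (n : ℕ) (hn : 1 ≤ n) :
    ∑ j ∈ Finset.range n, (-1 : ℝ) ^ j * (n.choose (j + 1)) = 1 := by
  have := expansion n 1
  simpa [zero_pow (by omega : n ≠ 0)] using this.symm

lemma choose_div_eq (n j : ℕ) :
    (n.choose j : ℝ) / ((j : ℝ) + 1) = ((n+1).choose (j+1) : ℝ) / ((n : ℝ) + 1) := by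
  have := Nat.add_one_mul_choose_eq n j
  have h : ((n + 1 : ℕ) : ℝ) * (n.choose j : ℝ) = ((n+1).choose (j+1) : ℝ) * ((j + 1 : ℕ) : ℝ) := by
    exact_mod_cast congrArg (Nat.cast : ℕ → ℝ) this
  push_cast at h
  have hj : ((j : ℝ) + 1) ≠ 0 := by positivity
  have hn : ((n : ℝ) + 1) ≠ 0 := by positivity
  field_simp
  linarith [h]

lemma S_eq (n : ℕ) :
    ∑ j ∈ Finset.range n, (-1 : ℝ) ^ j * (n.choose (j + 1)) / ((j : ℝ) + 1) = Hr n := by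
  induction n with
  | zero => simp [Hr]
  | succ n ih =>
    have hterm : ∀ j ∈ Finset.range (n + 1),
        (-1 : ℝ) ^ j * ((n+1).choose (j + 1)) / ((j : ℝ) + 1)
        = (-1 : ℝ) ^ j * (((n+1).choose (j+1) : ℝ) / ((n : ℝ) + 1))
          + (-1 : ℝ) ^ j * ((n.choose (j+1) : ℝ) / ((j : ℝ) + 1)) := by
      intro j _
      have e1 : (((n+1).choose (j+1) : ℕ) : ℝ) = (n.choose j : ℝ) + (n.choose (j+1) : ℝ) := by
        exact_mod_cast congrArg (Nat.cast : ℕ → ℝ) (Nat.choose_succ_succ n j)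
      rw [mul_div_assoc, ← choose_div_eq, e1]
      ring
    rw [Finset.sum_congr rfl hterm, Finset.sum_add_distrib]
    have h1 : ∑ j ∈ Finset.range (n+1), (-1 : ℝ) ^ j * (((n+1).choose (j+1) : ℝ) / ((n : ℝ) + 1))
        = 1 / ((n : ℝ) + 1) := by
      simp_rw [← mul_div_assoc, ← Finset.sum_div]
      rw [keysum (n+1) (by omega)]
    have h2 : ∑ j ∈ Finset.range (n+1), (-1 : ℝ) ^ j * ((n.choose (j+1) : ℝ) / ((j : ℝ) + 1))
        = Hr n := by
      rw [Finset.sum_range_succ]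
      simp only [Nat.choose_succ_self, Nat.cast_zero, zero_div, mul_zero, add_zero]
      simp_rw [← mul_div_assoc]
      exact ih
    rw [h1, h2, Hr_succ]
    ring

lemma T_eq (n : ℕ) :
    ∑ j ∈ Finset.range n, (-1 : ℝ) ^ j * (n.choose (j + 1)) / ((j : ℝ) + 1) ^ 2
      = ∑ m ∈ Finset.range n, Hr (m + 1) / ((m : ℝ) + 1) := by
  induction n with
  | zero => simp
  | succ n ih =>
    have hterm : ∀ j ∈ Finset.range (n + 1),
        (-1 : ℝ) ^ j * ((n+1).choose (j + 1)) / ((j : ℝ) + 1) ^ 2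
        = ((-1 : ℝ) ^ j * ((n+1).choose (j+1) : ℝ) / ((j : ℝ) + 1)) / ((n : ℝ) + 1)
          + (-1 : ℝ) ^ j * ((n.choose (j+1) : ℝ) / ((j : ℝ) + 1) ^ 2) := by
      intro j _
      have e1 : (((n+1).choose (j+1) : ℕ) : ℝ) = (n.choose j : ℝ) + (n.choose (j+1) : ℝ) := by
        exact_mod_cast congrArg (Nat.cast : ℕ → ℝ) (Nat.choose_succ_succ n j)
      have hX : (((n+1).choose (j+1):ℝ)/((j:ℝ)+1))/((n:ℝ)+1)
          = (n.choose j : ℝ)/(((j:ℝ)+1)^2) := by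
        rw [div_right_comm, ← choose_div_eq n j, div_div, ← sq]
      have lhsX : ((n+1).choose (j+1):ℝ)/(((j:ℝ)+1)^2)
          = (n.choose j : ℝ)/(((j:ℝ)+1)^2) + (n.choose (j+1) : ℝ)/(((j:ℝ)+1)^2) := by
        rw [e1]; ring
      calc (-1 : ℝ) ^ j * ((n+1).choose (j + 1)) / ((j : ℝ) + 1) ^ 2
          = (-1:ℝ)^j * (((n+1).choose (j+1):ℝ)/(((j:ℝ)+1)^2)) := by ring
        _ = (-1:ℝ)^j * ((((n+1).choose (j+1):ℝ)/((j:ℝ)+1))/((n:ℝ)+1)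
              + (n.choose (j+1) : ℝ)/(((j:ℝ)+1)^2)) := by rw [lhsX, ← hX]
        _ = ((-1 : ℝ) ^ j * ((n+1).choose (j+1) : ℝ) / ((j : ℝ) + 1)) / ((n : ℝ) + 1)
              + (-1 : ℝ) ^ j * ((n.choose (j+1) : ℝ) / ((j : ℝ) + 1) ^ 2) := by ring
    rw [Finset.sum_congr rfl hterm, Finset.sum_add_distrib]
    have h1 : ∑ j ∈ Finset.range (n+1),
        ((-1 : ℝ) ^ j * ((n+1).choose (j+1) : ℝ) / ((j : ℝ) + 1)) / ((n : ℝ) + 1)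
        = Hr (n+1) / ((n : ℝ) + 1) := by
      rw [← Finset.sum_div, S_eq]
    have h2 : ∑ j ∈ Finset.range (n+1), (-1 : ℝ) ^ j * ((n.choose (j+1) : ℝ) / ((j : ℝ) + 1) ^ 2)
        = ∑ m ∈ Finset.range n, Hr (m + 1) / ((m : ℝ) + 1) := by
      rw [Finset.sum_range_succ]
      simp only [Nat.choose_succ_self, Nat.cast_zero, zero_div, mul_zero, add_zero]
      simp_rw [← mul_div_assoc]
      exact ih
    rw [h1, h2, Finset.sum_range_succ]
    ring

lemma two_sum_eq (n : ℕ) :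
    2 * ∑ m ∈ Finset.range n, Hr (m + 1) / ((m : ℝ) + 1) = Hr n ^ 2 + H2r n := by
  induction n with
  | zero => simp [Hr, H2r]
  | succ n ih =>
    rw [Finset.sum_range_succ, mul_add, ih, Hr_succ]
    have h3 : H2r (n+1) = H2r n + 1 / ((n : ℝ) + 1) ^ 2 := by
      simp [H2r, Finset.sum_range_succ]
    rw [h3]
    have hn : ((n : ℝ) + 1) ≠ 0 := by positivity
    field_simp
    ring

open Finset MeasureTheory Filter Set

lemma gsum (L : ℝ) (n : ℕ) (t : ℝ) :
    1 - (1 - Real.exp (-(t / L))) ^ n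
      = ∑ j ∈ Finset.range n, (-1:ℝ)^j * (n.choose (j+1)) * Real.exp (-(((j:ℝ)+1)/L * t)) := by
  rw [expansion n (Real.exp (-(t/L)))]
  refine Finset.sum_congr rfl fun j _ => ?_
  congr 1
  rw [← Real.exp_nat_mul]
  congr 1
  push_cast
  ring

lemma gInt {L : ℝ} (hL : 0 < L) (n : ℕ) :
    IntegrableOn
      (fun t : ℝ => ∑ j ∈ Finset.range n, (-1:ℝ)^j * (n.choose (j+1)) * Real.exp (-(((j:ℝ)+1)/L * t)))
      (Ioi 0) := by
  apply integrable_finset_sum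
  intro j _
  exact (expInt (by positivity)).const_mul _

lemma gIntVal {L : ℝ} (hL : 0 < L) (n : ℕ) :
    ∫ t in Ioi (0:ℝ), ∑ j ∈ Finset.range n, (-1:ℝ)^j * (n.choose (j+1)) * Real.exp (-(((j:ℝ)+1)/L * t))
      = L * Hr n := by
  rw [integral_finset_sum _ (fun j _ => (expInt (by positivity)).const_mul _)]
  have h : ∀ j ∈ Finset.range n,
      ∫ t in Ioi (0:ℝ), (-1:ℝ)^j * ((n.choose (j+1) : ℝ)) * Real.exp (-(((j:ℝ)+1)/L * t))
        = ((-1:ℝ)^j * (n.choose (j+1)) / ((j:ℝ)+1)) * L := by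
    intro j _
    rw [integral_const_mul, expIntVal (by positivity), one_div_div]
    ring
  rw [Finset.sum_congr rfl h, ← Finset.sum_mul, S_eq]
  ring

lemma g2Int {L : ℝ} (hL : 0 < L) (n : ℕ) :
    IntegrableOn
      (fun t : ℝ =>
        (∑ j ∈ Finset.range n, (-1:ℝ)^j * (n.choose (j+1)) * Real.exp (-(((j:ℝ)+1)/L * t))) * (2 * t))
      (Ioi 0) := by
  have hpt : ∀ t : ℝ,
      (∑ j ∈ Finset.range n, (-1:ℝ)^j * (n.choose (j+1)) * Real.exp (-(((j:ℝ)+1)/L * t))) * (2 * t)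
      = ∑ j ∈ Finset.range n, (2 * ((-1:ℝ)^j * (n.choose (j+1)))) * (t * Real.exp (-(((j:ℝ)+1)/L * t))) := by
    intro t
    rw [Finset.sum_mul]
    exact Finset.sum_congr rfl fun j _ => by ring
  have hint : IntegrableOn
      (fun t : ℝ => ∑ j ∈ Finset.range n,
        (2 * ((-1:ℝ)^j * (n.choose (j+1)))) * (t * Real.exp (-(((j:ℝ)+1)/L * t)))) (Ioi 0) := by
    apply integrable_finset_sum
    intro j _
    exact (texpInt (by positivity)).const_mul _
  exact hint.congr (Filter.Eventually.of_forall fun t => (hpt t).symm)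

lemma g2IntVal {L : ℝ} (hL : 0 < L) (n : ℕ) :
    ∫ t in Ioi (0:ℝ),
        (∑ j ∈ Finset.range n, (-1:ℝ)^j * (n.choose (j+1)) * Real.exp (-(((j:ℝ)+1)/L * t))) * (2 * t)
      = L ^ 2 * (Hr n ^ 2 + H2r n) := by
  have hpt : ∀ t : ℝ,
      (∑ j ∈ Finset.range n, (-1:ℝ)^j * (n.choose (j+1)) * Real.exp (-(((j:ℝ)+1)/L * t))) * (2 * t)
      = ∑ j ∈ Finset.range n, (2 * ((-1:ℝ)^j * (n.choose (j+1)))) * (t * Real.exp (-(((j:ℝ)+1)/L * t))) := by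
    intro t
    rw [Finset.sum_mul]
    exact Finset.sum_congr rfl fun j _ => by ring
  rw [setIntegral_congr_fun measurableSet_Ioi (fun t _ => hpt t)]
  rw [integral_finset_sum _ (fun j _ => (texpInt (by positivity)).const_mul _)]
  have h : ∀ j ∈ Finset.range n,
      ∫ t in Ioi (0:ℝ), (2 * ((-1:ℝ)^j * ((n.choose (j+1) : ℝ)))) * (t * Real.exp (-(((j:ℝ)+1)/L * t)))
        = ((-1:ℝ)^j * (n.choose (j+1)) / ((j:ℝ)+1)^2) * (2 * L ^ 2) := by
    intro j _
    rw [integral_const_mul, texpIntVal (by positivity), div_pow, one_div_div]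
    field_simp
  rw [Finset.sum_congr rfl h, ← Finset.sum_mul, T_eq]
  linear_combination L ^ 2 * two_sum_eq n
open ProbabilityTheory in
lemma core {n : ℕ} (hn : 2 ≤ n) {Ω : Type} [MeasurableSpace Ω]
    (μ : Measure Ω) [IsProbabilityMeasure μ] (X : Fin n → Ω → ℝ)
    (hmeas : ∀ i, Measurable (X i))
    (hindep : iIndepFun X μ)
    (hcdf : ∀ i, ∀ x : ℝ, 0 ≤ x →
      (μ {ω | X i ω ≤ x}).toReal = 1 - Real.exp (-(x / Real.log n))) :
    (∫ ω, (⨆ i, X i ω) ∂μ) = Real.log n * Hr n ∧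
      variance (fun ω => ⨆ i, X i ω) μ = Real.log n ^ 2 * H2r n := by
  have hL : 0 < Real.log n := Real.log_pos (by exact_mod_cast (by omega : (1:ℕ) < n))
  set L := Real.log n with hLdef
  haveI hne : Nonempty (Fin n) := ⟨⟨0, by omega⟩⟩
  set M : Ω → ℝ := fun ω => ⨆ i, X i ω with hMdef
  have hM : Measurable M := Measurable.iSup hmeas
  have hbdd : ∀ ω, BddAbove (Set.range fun i => X i ω) :=
    fun ω => (Set.finite_range _).bddAbove
  have Hr_nonneg : 0 ≤ Hr n := Finset.sum_nonneg fun i _ => by positivity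
  have H2r_nonneg : 0 ≤ H2r n := Finset.sum_nonneg fun i _ => by positivity
  have hp01 : ∀ x : ℝ, 0 ≤ x → 0 ≤ 1 - Real.exp (-(x / L)) ∧ 1 - Real.exp (-(x / L)) ≤ 1 := by
    intro x hx
    have h1 : Real.exp (-(x / L)) ≤ 1 := by
      rw [← Real.exp_zero]
      exact Real.exp_le_exp.mpr (neg_nonpos.mpr (div_nonneg hx hL.le))
    have h2 : 0 < Real.exp (-(x / L)) := Real.exp_pos _
    constructor <;> linarith
  have hgnn : ∀ x : ℝ, 0 ≤ x → 0 ≤ 1 - (1 - Real.exp (-(x / L))) ^ n := by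
    intro x hx
    have := pow_le_one₀ (n := n) (hp01 x hx).1 (hp01 x hx).2
    linarith
  have hFle : ∀ x : ℝ, 0 ≤ x →
      μ {ω | M ω ≤ x} = ENNReal.ofReal ((1 - Real.exp (-(x / L))) ^ n) := by
    intro x hx
    have hset : {ω | M ω ≤ x} = ⋂ i, {ω | X i ω ≤ x} := by
      ext ω
      simp only [Set.mem_setOf_eq, Set.mem_iInter, hMdef]
      exact ciSup_le_iff (hbdd ω)
    have hXle : ∀ i : Fin n, μ {ω | X i ω ≤ x} = ENNReal.ofReal (1 - Real.exp (-(x / L))) := by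
      intro i
      rw [← hcdf i x hx, ENNReal.ofReal_toReal (measure_ne_top μ _)]
    have hprod := hindep.meas_iInter (s := fun i => {ω | X i ω ≤ x})
      (fun i => ⟨Set.Iic x, measurableSet_Iic, rfl⟩)
    rw [hset, hprod]
    simp_rw [hXle]
    rw [Finset.prod_const, Finset.card_univ, Fintype.card_fin,
      ← ENNReal.ofReal_pow (hp01 x hx).1]
  have hMsetMeas : ∀ x : ℝ, MeasurableSet {ω | M ω ≤ x} :=
    fun x => measurableSet_le hM measurable_const
  have htail : ∀ x : ℝ, 0 ≤ x →
      μ {ω | x < M ω} = ENNReal.ofReal (1 - (1 - Real.exp (-(x / L))) ^ n) := by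
    intro x hx
    have hc : {ω | x < M ω} = {ω | M ω ≤ x}ᶜ := by
      ext ω; simp [not_le]
    rw [hc, prob_compl_eq_one_sub (hMsetMeas x), hFle x hx,
      ENNReal.ofReal_sub 1 (pow_nonneg (hp01 x hx).1 n), ENNReal.ofReal_one]
  have h00 : μ {ω | X ⟨0, by omega⟩ ω ≤ 0} = 0 := by
    have h := hcdf ⟨0, by omega⟩ 0 le_rfl
    rw [← ENNReal.ofReal_toReal (measure_ne_top μ {ω | X ⟨0, by omega⟩ ω ≤ 0}), h]
    simp
  have hnn : 0 ≤ᵐ[μ] M := by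
    refine ae_iff.mpr (measure_mono_null ?_ h00)
    intro ω hω
    simp only [Set.mem_setOf_eq, Pi.zero_apply, not_le] at hω
    exact (le_ciSup (hbdd ω) ⟨0, by omega⟩).trans hω.le
  -- nonnegativity of the tail integrand (as a sum)
  have hsumnn : 0 ≤ᵐ[volume.restrict (Set.Ioi (0:ℝ))]
      (fun t => ∑ j ∈ Finset.range n,
        (-1:ℝ)^j * (n.choose (j+1)) * Real.exp (-(((j:ℝ)+1)/L * t))) := by
    refine (ae_restrict_iff' measurableSet_Ioi).2 (Filter.Eventually.of_forall fun t ht => ?_)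
    have h := hgnn t (le_of_lt ht)
    rw [gsum L n t] at h
    exact h
  -- first moment
  have hmean1 : ∫⁻ t in Set.Ioi (0:ℝ), μ {ω | t < M ω} = ENNReal.ofReal (L * Hr n) := by
    rw [setLIntegral_congr_fun measurableSet_Ioi
      (fun t (ht : t ∈ Set.Ioi (0:ℝ)) => by
        rw [htail t (le_of_lt ht), gsum L n t])]
    rw [← ofReal_integral_eq_lintegral_ofReal (gInt hL n) hsumnn, gIntVal hL n]
  have hkey1 : ∫⁻ ω, ENNReal.ofReal (M ω) ∂μ = ENNReal.ofReal (L * Hr n) := by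
    rw [lintegral_eq_lintegral_meas_lt μ hnn hM.aemeasurable]
    exact hmean1
  have hintM : Integrable M μ := by
    refine ⟨hM.aestronglyMeasurable, ?_⟩
    rw [hasFiniteIntegral_iff_ofReal hnn, hkey1]
    exact ENNReal.ofReal_lt_top
  have hEM : ∫ ω, M ω ∂μ = L * Hr n := by
    rw [integral_eq_lintegral_of_nonneg_ae hnn hM.aestronglyMeasurable, hkey1,
      ENNReal.toReal_ofReal (mul_nonneg hL.le Hr_nonneg)]
  -- second moment
  have hmean2 : ∫⁻ t in Set.Ioi (0:ℝ), μ {ω | t < M ω} * ENNReal.ofReal (2 * t)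
      = ENNReal.ofReal (L ^ 2 * (Hr n ^ 2 + H2r n)) := by
    rw [setLIntegral_congr_fun measurableSet_Ioi
      (fun t (ht : t ∈ Set.Ioi (0:ℝ)) => by
        rw [htail t (le_of_lt ht), gsum L n t,
          ← ENNReal.ofReal_mul (by rw [← gsum L n t]; exact hgnn t (le_of_lt ht))])]
    have hsum2nn : 0 ≤ᵐ[volume.restrict (Set.Ioi (0:ℝ))]
        (fun t => (∑ j ∈ Finset.range n,
          (-1:ℝ)^j * (n.choose (j+1)) * Real.exp (-(((j:ℝ)+1)/L * t))) * (2 * t)) := by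
      refine (ae_restrict_iff' measurableSet_Ioi).2 (Filter.Eventually.of_forall fun t ht => ?_)
      have h1 : (0:ℝ) < t := ht
      have h2 := hgnn t h1.le
      have h3 : (0:ℝ) ≤ (∑ j ∈ Finset.range n,
          (-1:ℝ)^j * (n.choose (j+1)) * Real.exp (-(((j:ℝ)+1)/L * t))) * (2 * t) := by
        refine mul_nonneg ?_ (by linarith)
        rw [← gsum L n t]
        exact h2
      simpa using h3
    rw [← ofReal_integral_eq_lintegral_ofReal (g2Int hL n) hsum2nn, g2IntVal hL n]
  have hkey2 : ∫⁻ ω, ENNReal.ofReal (M ω ^ 2) ∂μ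
      = ENNReal.ofReal (L ^ 2 * (Hr n ^ 2 + H2r n)) := by
    have hlc := lintegral_comp_eq_lintegral_meas_lt_mul μ hnn hM.aemeasurable
      (g := fun t => 2 * t)
      (fun t _ => (continuous_const.mul continuous_id).intervalIntegrable 0 t)
      ((ae_restrict_iff' measurableSet_Ioi).2 (Filter.Eventually.of_forall
        (fun t (ht : t ∈ Set.Ioi (0:ℝ)) => by
          have h1 : (0:ℝ) < t := ht
          simpa using (by linarith : (0:ℝ) ≤ 2 * t))))
    have hsq : ∀ ω, (∫ s in (0:ℝ)..(M ω), 2 * s) = M ω ^ 2 := by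
      intro ω
      rw [intervalIntegral.integral_const_mul, integral_id]
      ring
    simp_rw [hsq] at hlc
    rw [hlc]
    exact hmean2
  have hint2 : Integrable (fun ω => M ω ^ 2) μ := by
    refine ⟨((hM.pow_const 2).aestronglyMeasurable), ?_⟩
    rw [hasFiniteIntegral_iff_ofReal (Filter.Eventually.of_forall fun ω => sq_nonneg _), hkey2]
    exact ENNReal.ofReal_lt_top
  have hEM2 : ∫ ω, M ω ^ 2 ∂μ = L ^ 2 * (Hr n ^ 2 + H2r n) := by
    rw [integral_eq_lintegral_of_nonneg_ae (Filter.Eventually.of_forall fun ω => sq_nonneg _)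
      ((hM.pow_const 2).aestronglyMeasurable), hkey2,
      ENNReal.toReal_ofReal (by positivity)]
  have hmem : MemLp M 2 μ := (memLp_two_iff_integrable_sq hM.aestronglyMeasurable).2 hint2
  refine ⟨hEM, ?_⟩
  have hvar := variance_eq_sub hmem
  have hpow : μ[M ^ 2] = ∫ ω, M ω ^ 2 ∂μ := by
    congr 1
  rw [show variance (fun ω => ⨆ i, X i ω) μ = variance M μ from rfl, hvar, hpow, hEM2, hEM]
  ring

lemma Hr_eq_harmonic (n : ℕ) : Hr n = ((harmonic n : ℚ) : ℝ) := by
  rw [Hr, harmonic]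
  push_cast
  simp [one_div]

lemma Hr_div_log : Filter.Tendsto (fun n : ℕ => Hr n / Real.log n) Filter.atTop (nhds 1) := by
  have hlog : Filter.Tendsto (fun n : ℕ => Real.log n) Filter.atTop Filter.atTop :=
    Real.tendsto_log_atTop.comp tendsto_natCast_atTop_atTop
  have h' : Filter.Tendsto (fun n : ℕ => Hr n - Real.log n) Filter.atTop
      (nhds Real.eulerMascheroniConstant) := by
    apply Real.tendsto_harmonic_sub_log.congr
    intro n
    rw [Hr_eq_harmonic]
  have h1 : Filter.Tendsto (fun n : ℕ => (Hr n - Real.log n) / Real.log n)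
      Filter.atTop (nhds 0) := h'.div_atTop hlog
  have h2 : Filter.Tendsto (fun n : ℕ => (Hr n - Real.log n) / Real.log n + 1)
      Filter.atTop (nhds 1) := by
    simpa using h1.add (tendsto_const_nhds (x := (1:ℝ)))
  apply h2.congr'
  filter_upwards [Filter.eventually_ge_atTop 2] with n hn
  have hL : Real.log n ≠ 0 :=
    (Real.log_pos (by exact_mod_cast (by omega : (1:ℕ) < n))).ne'
  field_simp
  ring

lemma H2r_lim : Filter.Tendsto (fun n : ℕ => H2r n) Filter.atTop (nhds (Real.pi ^ 2 / 6)) := by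
  have h2 := hasSum_zeta_two.tendsto_sum_nat
  have h3 := h2.comp (Filter.tendsto_add_atTop_nat 1)
  apply h3.congr
  intro n
  simp only [Function.comp_apply]
  rw [Finset.sum_range_succ']
  simp [H2r]

lemma Hr_pos (n : ℕ) (hn : 1 ≤ n) : 0 < Hr n :=
  Finset.sum_pos (fun i _ => by positivity) (by rw [Finset.nonempty_range_iff]; omega)


open ProbabilityTheory Filter in
/-- For each `n ≥ 2`, let `X n 0, …, X n (n-1)` be independent random variables on a
probability space `(Ω n, μ n)`, each exponentially distributed with rate `1/log n`
(i.e., `Pr{X n i ≤ x} = 1 - exp(-x/log n)` for `x ≥ 0`), and let `Mₙ = ⨆ i, X n i` be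
their maximum. Then, as `n → ∞`: `E(Mₙ) ~ (log n)²`, `Var(Mₙ) ~ (π²/6)·(log n)²`,
`Var(Mₙ)/E(Mₙ) → π²/6`, and in particular `Var(Mₙ) ~ (π²/6)·E(Mₙ)`
(Taylor's law with coefficient `π²/6` and exponent 1). -/
theorem stmt7 (Ω : ℕ → Type) [∀ n, MeasurableSpace (Ω n)]
    (μ : ∀ n, Measure (Ω n)) [∀ n, IsProbabilityMeasure (μ n)]
    (X : ∀ n, Fin n → Ω n → ℝ)
    (hmeas : ∀ n, ∀ i, Measurable (X n i))
    (hindep : ∀ n, 2 ≤ n → iIndepFun (X n) (μ n))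
    (hcdf : ∀ n, 2 ≤ n → ∀ i, ∀ x : ℝ, 0 ≤ x →
      ((μ n) {ω | X n i ω ≤ x}).toReal = 1 - Real.exp (-(x / Real.log n))) :
    Tendsto (fun n : ℕ =>
        (∫ ω, (⨆ i, X n i ω) ∂(μ n)) / Real.log n ^ 2) atTop (nhds 1)
    ∧ Tendsto (fun n : ℕ =>
        variance (fun ω => ⨆ i, X n i ω) (μ n) / (Real.pi ^ 2 / 6 * Real.log n ^ 2))
        atTop (nhds 1)
    ∧ Tendsto (fun n : ℕ =>
        variance (fun ω => ⨆ i, X n i ω) (μ n) / ∫ ω, (⨆ i, X n i ω) ∂(μ n))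
        atTop (nhds (Real.pi ^ 2 / 6))
    ∧ Tendsto (fun n : ℕ =>
        variance (fun ω => ⨆ i, X n i ω) (μ n)
          / (Real.pi ^ 2 / 6 * ∫ ω, (⨆ i, X n i ω) ∂(μ n))) atTop (nhds 1) := by
  have hcore : ∀ n : ℕ, 2 ≤ n →
      (∫ ω, (⨆ i, X n i ω) ∂(μ n)) = Real.log n * Hr n ∧
        variance (fun ω => ⨆ i, X n i ω) (μ n) = Real.log n ^ 2 * H2r n :=
    fun n hn => core hn (μ n) (X n) (hmeas n) (hindep n hn) (fun i x hx => hcdf n hn i x hx)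
  have hpi : (Real.pi ^ 2 / 6) ≠ 0 := by positivity
  have hfacts : ∀ᶠ n : ℕ in atTop,
      (∫ ω, (⨆ i, X n i ω) ∂(μ n)) = Real.log n * Hr n ∧
        variance (fun ω => ⨆ i, X n i ω) (μ n) = Real.log n ^ 2 * H2r n ∧
        0 < Real.log n ∧ 0 < Hr n := by
    filter_upwards [eventually_ge_atTop 2] with n hn
    exact ⟨(hcore n hn).1, (hcore n hn).2,
      Real.log_pos (by exact_mod_cast (by omega : (1:ℕ) < n)), Hr_pos n (by omega)⟩
  have hH2d : Tendsto (fun n : ℕ => H2r n / (Real.pi ^ 2 / 6)) atTop (nhds 1) := by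
    have := H2r_lim.div_const (Real.pi ^ 2 / 6)
    rwa [div_self hpi] at this
  refine ⟨?_, ?_, ?_, ?_⟩
  · apply Hr_div_log.congr'
    filter_upwards [hfacts] with n ⟨hE, hV, hL, hH⟩
    rw [hE]
    field_simp
  · apply hH2d.congr'
    filter_upwards [hfacts] with n ⟨hE, hV, hL, hH⟩
    rw [hV]
    field_simp
  · have h : Tendsto (fun n : ℕ => H2r n / (Hr n / Real.log n)) atTop
        (nhds ((Real.pi ^ 2 / 6) / 1)) := H2r_lim.div Hr_div_log one_ne_zero
    rw [div_one] at h
    apply h.congr'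
    filter_upwards [hfacts] with n ⟨hE, hV, hL, hH⟩
    rw [hE, hV]
    field_simp
  · have h : Tendsto (fun n : ℕ => H2r n / (Real.pi ^ 2 / 6) * (Hr n / Real.log n)⁻¹) atTop
        (nhds (1 * 1⁻¹)) := hH2d.mul (Hr_div_log.inv₀ one_ne_zero)
    norm_num at h
    apply h.congr'
    filter_upwards [hfacts] with n ⟨hE, hV, hL, hH⟩
    rw [hE, hV]
    field_simp
end

section
/- As k → ∞ (k a positive integer), -log(1 - (1 - 1/k)^{1/k}) ~ 2·log k; that is, lim_{k→∞} [-log(1 - (1 - 1/k)^{1/k})] / (2 log k) = 1. -/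
open Filter Real

lemma lemA : Tendsto (fun k : ℕ => (k : ℝ) * Real.log (1 - 1 / k)) atTop (nhds (-1)) := by
  have h := (Real.tendsto_mul_log_one_add_div_atTop (-1)).comp
    (tendsto_natCast_atTop_atTop (R := ℝ))
  simpa [Function.comp_def, neg_div, sub_eq_add_neg] using h

lemma lemExp : Tendsto (fun y : ℝ => (Real.exp y - 1) / y) (nhdsWithin 0 {0}ᶜ) (nhds 1) := by
  have h := Real.hasDerivAt_exp 0
  rw [hasDerivAt_iff_tendsto_slope] at h
  simp only [slope_fun_def, Real.exp_zero, sub_zero] at h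
  simpa [div_eq_inv_mul] using h

lemma lemY : Tendsto (fun k : ℕ => Real.log (1 - 1 / k) * (1 / k)) atTop (nhds 0) := by
  have h2 : Tendsto (fun k : ℕ => (1 : ℝ) / k ^ 2) atTop (nhds 0) := by
    apply tendsto_one_div_atTop_nhds_zero_nat.comp (tendsto_id.atTop_mul_atTop tendsto_id) |>.congr
    intro k; simp [sq]
  have := lemA.mul h2
  rw [show (-1 : ℝ) * 0 = 0 by ring] at this
  apply this.congr'
  filter_upwards [eventually_gt_atTop 0] with k hk
  have : (k : ℝ) ≠ 0 := Nat.cast_ne_zero.mpr hk.ne'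
  field_simp

lemma lemB : Tendsto (fun k : ℕ => (k : ℝ) ^ 2 * (1 - (1 - 1 / k) ^ ((1 : ℝ) / k)))
    atTop (nhds 1) := by
  set y : ℕ → ℝ := fun k => Real.log (1 - 1 / k) * (1 / k) with hy
  have hyne : ∀ᶠ k : ℕ in atTop, y k < 0 := by
    filter_upwards [eventually_ge_atTop 2] with k hk
    have hk0 : (0 : ℝ) < k := by positivity
    have h1 : (0 : ℝ) < 1 - 1 / k := by
      rw [sub_pos, div_lt_one hk0]; exact_mod_cast hk
    have h2 : (1 : ℝ) - 1 / k < 1 := by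
      simp only [sub_lt_self_iff]; positivity
    have := Real.log_neg h1 h2
    have : Real.log (1 - 1 / (k : ℝ)) * (1 / k) < 0 :=
      mul_neg_of_neg_of_pos this (by positivity)
    exact this
  have hyt : Tendsto y atTop (nhdsWithin 0 {0}ᶜ) := by
    apply tendsto_nhdsWithin_of_tendsto_nhds_of_eventually_within _ lemY
    filter_upwards [hyne] with k hk
    exact hk.ne
  have h1 : Tendsto (fun k : ℕ => (Real.exp (y k) - 1) / y k) atTop (nhds 1) :=
    lemExp.comp hyt
  have h2 : Tendsto (fun k : ℕ => -((k : ℝ) * Real.log (1 - 1 / k))) atTop (nhds 1) := by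
    simpa using lemA.neg
  have h3 := h1.mul h2
  rw [mul_one] at h3
  apply h3.congr'
  filter_upwards [eventually_ge_atTop 2, hyne] with k hk hyk
  have hk0 : (0 : ℝ) < k := by positivity
  have h1k : (0 : ℝ) < 1 - 1 / k := by
    rw [sub_pos, div_lt_one hk0]; exact_mod_cast hk
  have hrw : (1 - 1 / (k : ℝ)) ^ ((1 : ℝ) / k) = Real.exp (y k) := by
    rw [Real.rpow_def_of_pos h1k]
  rw [hrw]
  have hyne' : y k ≠ 0 := hyk.ne
  have hkne : (k : ℝ) ≠ 0 := hk0.ne'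
  have hkey : (k : ℝ) * Real.log (1 - 1 / k) = (k : ℝ) ^ 2 * y k := by
    rw [hy]; field_simp
  rw [hkey]
  field_simp
  ring

/-- As `k → ∞`, `-log(1 - (1 - 1/k)^{1/k}) ~ 2 log k`. -/
theorem stmt9 :
    Tendsto (fun k : ℕ =>
        (-Real.log (1 - (1 - 1 / (k : ℝ)) ^ ((1 : ℝ) / (k : ℝ)))) / (2 * Real.log k))
      atTop (nhds 1) := by
  have hlog : Tendsto (fun k : ℕ =>
      Real.log ((k : ℝ) ^ 2 * (1 - (1 - 1 / k) ^ ((1 : ℝ) / k)))) atTop (nhds 0) := by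
    have := (Real.continuousAt_log one_ne_zero).tendsto.comp lemB
    simpa [Function.comp_def] using this
  have hD : Tendsto (fun k : ℕ => 2 * Real.log k) atTop atTop := by
    apply Tendsto.const_mul_atTop two_pos
    exact Real.tendsto_log_atTop.comp tendsto_natCast_atTop_atTop
  have hdiv := hlog.div_atTop hD
  have hfin := (tendsto_const_nhds (α := ℕ) (f := atTop) (x := (1 : ℝ))).sub hdiv
  rw [sub_zero] at hfin
  apply hfin.congr'
  filter_upwards [eventually_ge_atTop 2] with k hk
  have hk0 : (0 : ℝ) < k := by positivity
  have h1k : (0 : ℝ) < 1 - 1 / k := by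
    rw [sub_pos, div_lt_one hk0]; exact_mod_cast hk
  have h2k : (1 : ℝ) - 1 / k < 1 := by
    simp only [sub_lt_self_iff]; positivity
  have hxlt : (1 - 1 / (k : ℝ)) ^ ((1 : ℝ) / k) < 1 :=
    Real.rpow_lt_one h1k.le h2k (by positivity)
  have hxpos : (0 : ℝ) < 1 - (1 - 1 / (k : ℝ)) ^ ((1 : ℝ) / k) := by linarith
  have hlogk : (0 : ℝ) < Real.log k := by
    apply Real.log_pos; exact_mod_cast hk.trans_lt' one_lt_two
  have hmul : Real.log ((k : ℝ) ^ 2 * (1 - (1 - 1 / k) ^ ((1 : ℝ) / k)))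
      = 2 * Real.log k + Real.log (1 - (1 - 1 / k) ^ ((1 : ℝ) / k)) := by
    rw [Real.log_mul (by positivity) hxpos.ne', Real.log_pow]
    push_cast; ring
  rw [hmul]
  have hDne : (2 : ℝ) * Real.log k ≠ 0 := by positivity
  field_simp
  ring
end
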